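/- If S is a convex full subquiver of Q̃^{(d,n)} such that π is injective on S_0 and π(S_0) is pairwise non-intertwining of maximal size (corresponding to a triangulation of C(n+2d+1, 2d)), then S contains at most one vertex from each ν_d-orbit; in particular, S is a slice. -/

import Mathlib

/-- `Dset m d A`: the set Ď(m,d) of (d+1)-tuples of integers with consecutive
gaps ≥ 2, cyclically (a_d + 2 ≤ a_0 + m). -/
def Dset (m d : ℕ) (A : Fin (d+1) → ℤ) : Prop :=
  (∀ i : Fin d, A i.castSucc + 2 ≤ A i.succ) ∧ A (Fin.last d) + 2 ≤ A 0 + (m : ℤ)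

/-- Reduction mod m with representatives in {1, …, m}. -/
def pimod (m : ℕ) (a : ℤ) : ℤ := (a - 1) % (m : ℤ) + 1

/-- Intertwining X ⋏ Y of two (d+1)-tuples regarded as cyclically ordered
d-simplices with entries mod m: for some cyclic shift l of the order on [m] and
cyclic rotations p, q of the index sets, the entries interleave strictly:
x_0 <_l y_0 <_l x_1 <_l ⋯ <_l x_d <_l y_d. -/
def Intertw (m d : ℕ) (X Y : Fin (d+1) → ℤ) : Prop :=
  ∃ l : ℤ, ∃ p q : Fin (d+1),
    (∀ i : Fin (d+1), (X (i + p) - l) % (m : ℤ) < (Y (i + q) - l) % (m : ℤ)) ∧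
    (∀ i : Fin d, (Y (i.castSucc + q) - l) % (m : ℤ) < (X (i.succ + p) - l) % (m : ℤ))

/-- i-th standard basis vector of ℤ^{d+1}. -/
def Evec (d : ℕ) (i : Fin (d+1)) : Fin (d+1) → ℤ := fun j => if j = i then 1 else 0

/-- Arrows of the quiver Q̃^{(d,n)} (with m = n + 2d + 1): A → A + E_i whenever
both endpoints are vertices. -/
def TArrow (m d : ℕ) (A B : Fin (d+1) → ℤ) : Prop :=
  Dset m d A ∧ Dset m d B ∧ ∃ i : Fin (d+1), B = A + Evec d i

/-! For `n ≥ 2` not every gap of a vertex can be `2`, so raising its entries one at a time,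
cyclically backwards from a gap of width at least `3`, is a path `A → A + (1,…,1)` in the quiver.
Hence if `A` and `A + k` with `k > 0` both lie in the convex set `S`, so does `A + (1,…,1)`;
but `π(A)` and `π(A + (1,…,1))` intertwine. So `S` meets each `ν_d`-orbit at most once.
The orbits are represented by the vertices with first entry `0`, and their gap excesses identify
these with the compositions of `n - 1` into `d + 1` parts; there are `C(n+d-1, d)` of them,
which is `|S|`, so `S` meets every orbit. For `n = 1` the count makes `S` a single vertex, and for
`n = 0` there are no vertices at all. -/

open Finset

section Dset

variable {m d : ℕ} {A : Fin (d+1) → ℤ}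

lemma Dset.add_const (hA : Dset m d A) (k : ℤ) : Dset m d (fun j => A j + k) :=
  ⟨fun i => by linarith [hA.1 i], by linarith [hA.2]⟩

lemma Dset.monotone (hA : Dset m d A) : Monotone A :=
  Fin.monotone_iff_le_succ.2 fun i => by linarith [hA.1 i]

variable (m) in
/-- The excess over `2` of the gap after position `i`, read cyclically: the gap after the last
entry is `A 0 + m - A (last d)`. -/
def gapExcess (A : Fin (d+1) → ℤ) (i : Fin (d+1)) : ℤ :=
  A (i + 1) - A i - 2 + if i = Fin.last d then (m : ℤ) else 0

lemma gapExcess_castSucc (i : Fin d) :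
    gapExcess m A i.castSucc = A i.succ - A i.castSucc - 2 := by
  simp [gapExcess, Fin.coeSucc_eq_succ, Fin.castSucc_ne_last]

lemma gapExcess_last : gapExcess m A (Fin.last d) = A 0 + m - A (Fin.last d) - 2 := by
  simp [gapExcess]; ring

lemma gapExcess_add (δ : Fin (d+1) → ℤ) (i : Fin (d+1)) :
    gapExcess m (A + δ) i = gapExcess m A i + (δ (i + 1) - δ i) := by
  simp only [gapExcess, Pi.add_apply]; ring

lemma dset_iff_gapExcess_nonneg : Dset m d A ↔ ∀ i, 0 ≤ gapExcess m A i := by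
  simp only [Fin.forall_fin_succ', gapExcess_castSucc, gapExcess_last, Dset]
  constructor <;> rintro ⟨h, hl⟩ <;> exact ⟨fun i => by linarith [h i], by linarith⟩

lemma sum_gapExcess : ∑ i, gapExcess m A i = m - 2 * (d + 1) := by
  have hcyc : ∑ i, A (i + 1) = ∑ i, A i := Equiv.sum_comp (Equiv.addRight (1 : Fin (d+1))) A
  simp only [gapExcess, sum_add_distrib, sum_sub_distrib, hcyc, sum_ite_eq', mem_univ,
    if_true, sum_const, card_univ, Fintype.card_fin, nsmul_eq_mul]
  push_cast; ring

lemma Dset.two_mul_succ_le (hA : Dset m d A) : 2 * (d + 1) ≤ m := by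
  have := sum_nonneg fun i (_ : i ∈ univ) => dset_iff_gapExcess_nonneg.1 hA i
  rw [sum_gapExcess] at this
  omega

lemma exists_one_le_gapExcess (hm : 2 * d + 3 ≤ m) : ∃ u, 1 ≤ gapExcess m A u := by
  by_contra! h
  have := sum_nonpos fun i (_ : i ∈ univ) => Order.lt_one_iff_nonpos.1 (h i)
  rw [sum_gapExcess] at this
  omega

end Dset

section Path

variable {m d : ℕ} {A : Fin (d+1) → ℤ}

variable (d) in
/-- The indicator of the `t` positions cyclically preceding and including `u`. -/
def cyclicRun (u : Fin (d+1)) (t : ℕ) (i : Fin (d+1)) : ℤ :=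
  if ((u - i : Fin (d+1)) : ℕ) < t then 1 else 0

lemma eq_of_mem_cyclicRun_of_succ_not_mem {u i : Fin (d+1)} {t : ℕ}
    (hi : ((u - i : Fin (d+1)) : ℕ) < t) (hi' : ¬ ((u - (i + 1) : Fin (d+1)) : ℕ) < t) :
    i = u := by
  rw [← sub_sub, Fin.coe_sub_one] at hi'
  split_ifs at hi' with h
  · exact (sub_eq_zero.1 h).symm
  · omega

lemma Dset.add_cyclicRun (hA : Dset m d A) {u : Fin (d+1)} (hu : 1 ≤ gapExcess m A u) (t : ℕ) :
    Dset m d (A + cyclicRun d u t) := by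
  refine dset_iff_gapExcess_nonneg.2 fun i => ?_
  rw [gapExcess_add]
  have h0 := dset_iff_gapExcess_nonneg.1 hA i
  unfold cyclicRun
  by_cases hi : ((u - i : Fin (d+1)) : ℕ) < t <;>
    by_cases hi' : ((u - (i + 1) : Fin (d+1)) : ℕ) < t <;> simp only [hi, hi', if_true, if_false]
  · omega
  · rw [eq_of_mem_cyclicRun_of_succ_not_mem hi hi']
    omega
  · omega
  · omega

lemma cyclicRun_succ (u : Fin (d+1)) {t : ℕ} (ht : t < d + 1) :
    cyclicRun d u (t + 1) = cyclicRun d u t + Evec d (u - ⟨t, ht⟩) := by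
  funext i
  have : i = u - ⟨t, ht⟩ ↔ ((u - i : Fin (d+1)) : ℕ) = t := by
    rw [eq_sub_iff_add_eq, eq_comm, ← sub_eq_iff_eq_add', Fin.ext_iff, Fin.val_mk]
  simp only [cyclicRun, Evec, Pi.add_apply, this]
  split_ifs <;> omega

lemma reflTransGen_add_cyclicRun (hA : Dset m d A) {u : Fin (d+1)} (hu : 1 ≤ gapExcess m A u)
    {t : ℕ} (ht : t ≤ d + 1) : Relation.ReflTransGen (TArrow m d) A (A + cyclicRun d u t) := by
  induction t with
  | zero =>
    have : cyclicRun d u 0 = 0 := by funext; simp [cyclicRun]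
    simpa [this] using .refl
  | succ t ih =>
    refine (ih (by omega)).tail ⟨hA.add_cyclicRun hu t, hA.add_cyclicRun hu (t + 1),
      u - ⟨t, by omega⟩, ?_⟩
    rw [cyclicRun_succ u (by omega), add_assoc]

lemma Dset.reflTransGen_add_one (hA : Dset m d A) (hm : 2 * d + 3 ≤ m) :
    Relation.ReflTransGen (TArrow m d) A (fun j => A j + 1) := by
  obtain ⟨u, hu⟩ := exists_one_le_gapExcess (A := A) hm
  convert reflTransGen_add_cyclicRun hA hu le_rfl using 2 with j
  simp [cyclicRun, (u - j).isLt]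

lemma Dset.reflTransGen_add_natCast (hA : Dset m d A) (hm : 2 * d + 3 ≤ m) (k : ℕ) :
    Relation.ReflTransGen (TArrow m d) A (fun j => A j + k) := by
  induction k with
  | zero => simpa using .refl
  | succ k ih =>
    convert ih.trans ((hA.add_const k).reflTransGen_add_one hm) using 2 with j
    push_cast; ring

end Path

lemma pimod_sub_emod (m : ℕ) (a l : ℤ) : (pimod m a - l) % m = (a - l) % m := by
  have := ((Int.mod_modEq (a - 1) m).add_right 1).sub_right l
  rwa [sub_add_cancel] at this

/-- The interleaving is witnessed by reading `[m]` cyclically from `A 0`, without rotating the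
indices. -/
lemma Dset.intertw_pimod_add_one {m d : ℕ} {A : Fin (d+1) → ℤ} (hA : Dset m d A) :
    Intertw m d (fun j => pimod m (A j)) (fun j => pimod m (A j + 1)) := by
  have hm := hA.two_mul_succ_le
  have hrange : ∀ i, 0 ≤ A i - A 0 ∧ A i - A 0 + 2 ≤ m := fun i =>
    ⟨by linarith [hA.monotone (Fin.zero_le i)],
      by linarith [hA.monotone (Fin.le_last i), hA.2]⟩
  have hred : ∀ i, (A i - A 0) % m = A i - A 0 ∧ (A i + 1 - A 0) % m = A i - A 0 + 1 := by
    intro i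
    obtain ⟨h0, h1⟩ := hrange i
    rw [add_sub_right_comm]
    exact ⟨Int.emod_eq_of_lt h0 (by linarith), Int.emod_eq_of_lt (by linarith) (by linarith)⟩
  refine ⟨A 0, 0, 0, fun i => ?_, fun i => ?_⟩
  · simp only [add_zero, pimod_sub_emod, hred]
    omega
  · simp only [add_zero, pimod_sub_emod, hred]
    linarith [hA.1 i]

/-- `A + (1,…,1)` lies on a path from `A` to `A + k`, and `π(A)`, `π(A + (1,…,1))` intertwine. -/
lemma eq_zero_of_add_const_mem {m d : ℕ} {S : Set (Fin (d+1) → ℤ)}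
    (hS : ∀ X ∈ S, Dset m d X)
    (hconv : ∀ A ∈ S, ∀ B ∈ S, ∀ X, Relation.ReflTransGen (TArrow m d) A X →
      Relation.ReflTransGen (TArrow m d) X B → X ∈ S)
    (hnon : ∀ A ∈ S, ∀ B ∈ S, A ≠ B →
      ¬ Intertw m d (fun j => pimod m (A j)) (fun j => pimod m (B j)))
    (hm : 2 * d + 3 ≤ m) {A : Fin (d+1) → ℤ} (hA : A ∈ S) {k : ℤ}
    (hk : (fun j => A j + k) ∈ S) : k = 0 := by
  have not_pos : ∀ A ∈ S, ∀ k : ℕ, (fun j => A j + (k + 1 : ℕ)) ∉ S := by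
    intro A hA k hk
    have hDA := hS A hA
    have hA1 : (fun j => A j + 1) ∈ S := hconv A hA _ hk _ (hDA.reflTransGen_add_one hm) <| by
      convert (hDA.add_const 1).reflTransGen_add_natCast hm k using 2 with j
      push_cast; ring
    refine hnon A hA _ hA1 (fun h => ?_) hDA.intertw_pimod_add_one
    simpa using congrFun h 0
  obtain ⟨k, rfl | rfl⟩ := Int.eq_nat_or_neg k <;> rcases k with _ | k
  · rfl
  · exact absurd hk (not_pos A hA k)
  · rfl
  · refine absurd hA ?_
    convert not_pos _ hk k using 2
    ext j
    push_cast
    ring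

section Counting

variable {m d : ℕ}

/-- One representative of each `ν_d`-orbit of `Ď(m,d)`. -/
def normalizedDset (m d : ℕ) : Set (Fin (d+1) → ℤ) := {B | Dset m d B ∧ B 0 = 0}

def ofGapExcess (d : ℕ) (P : Fin (d+1) → ℕ) : Fin (d+1) → ℤ :=
  Fin.partialSum fun i : Fin d => (P i.castSucc : ℤ) + 2

lemma gapExcess_ofGapExcess (hm : 2 * (d + 1) ≤ m) {P : Fin (d+1) → ℕ}
    (hP : ∑ i, P i = m - 2 * (d + 1)) : gapExcess m (ofGapExcess d P) = fun i => (P i : ℤ) := by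
  have hcast : ∀ i : Fin d, gapExcess m (ofGapExcess d P) i.castSucc = P i.castSucc := fun i => by
    simp [gapExcess_castSucc, ofGapExcess, Fin.partialSum_succ]
  funext i
  induction i using Fin.lastCases with
  | cast i => exact hcast i
  | last =>
    have hsum := sum_gapExcess (m := m) (A := ofGapExcess d P)
    have hPz : ((∑ i, P i : ℕ) : ℤ) = m - 2 * (d + 1) := by rw [hP]; push_cast [hm]; ring
    rw [Fin.sum_univ_castSucc] at hsum hPz
    simp only [hcast] at hsum
    push_cast at hPz
    linarith

def normalizedDsetEquiv (hm : 2 * (d + 1) ≤ m) :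
    normalizedDset m d ≃ {P : Fin (d+1) → ℕ // ∑ i, P i = m - 2 * (d + 1)} where
  toFun B := ⟨fun i => (gapExcess m B.1 i).toNat, by
    have hsum := sum_gapExcess (m := m) (A := B.1)
    have hnn := dset_iff_gapExcess_nonneg.1 B.2.1
    zify [hm]
    rw [← hsum]
    exact sum_congr rfl fun i _ => Int.toNat_of_nonneg (hnn i)⟩
  invFun P := ⟨ofGapExcess d P,
    dset_iff_gapExcess_nonneg.2 (by simp [gapExcess_ofGapExcess hm P.2]), Fin.partialSum_zero _⟩
  left_inv B := by
    obtain ⟨B, hB, hB0⟩ := B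
    have hnn := dset_iff_gapExcess_nonneg.1 hB
    refine Subtype.ext (funext fun i => ?_)
    induction i using Fin.induction with
    | zero => simp [ofGapExcess, hB0]
    | succ i ih =>
      simp only [ofGapExcess, Fin.partialSum_succ] at ih ⊢
      rw [ih, Int.toNat_of_nonneg (hnn _), gapExcess_castSucc]
      ring
  right_inv P := by
    ext i
    simp [gapExcess_ofGapExcess hm P.2]

lemma natCard_normalizedDset (hm : 2 * (d + 1) ≤ m) :
    Nat.card (normalizedDset m d) = (m - d - 2).choose d := by
  rw [Nat.card_congr ((normalizedDsetEquiv hm).trans (Sym.equivNatSumOfFintype _ _).symm),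
    Sym.natCard_sym_eq_choose, Nat.card_fin,
    show d + 1 + (m - 2 * (d + 1)) - 1 = m - d - 2 by omega]
  exact Nat.choose_symm_of_eq_add (by omega)

end Counting

lemma Dset.sub_apply_zero {m d : ℕ} {A : Fin (d+1) → ℤ} (hA : Dset m d A) :
    (fun j => A j - A 0) ∈ normalizedDset m d :=
  ⟨by simpa only [← sub_eq_add_neg] using hA.add_const (-A 0), sub_self _⟩

lemma existsUnique_add_const_mem {m d : ℕ} {S : Set (Fin (d+1) → ℤ)}
    (hS : ∀ X ∈ S, Dset m d X)
    (hunique : ∀ A ∈ S, ∀ k : ℤ, (fun j => A j + k) ∈ S → k = 0)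
    [Finite (normalizedDset m d)] (hcard : Nat.card S = Nat.card (normalizedDset m d))
    {A : Fin (d+1) → ℤ} (hA : Dset m d A) : ∃! k : ℤ, (fun j => A j + k) ∈ S := by
  let normalize : S → normalizedDset m d := fun X => ⟨_, (hS X X.2).sub_apply_zero⟩
  have hinj : Function.Injective normalize := fun X Y hXY => by
    have hY : ∀ j, Y.1 j = X.1 j + (Y.1 0 - X.1 0) := fun j => by
      have := congrFun (congrArg Subtype.val hXY) j
      simp only [normalize] at this
      linarith
    have hk := hunique X X.2 (Y.1 0 - X.1 0) (by simpa only [← hY] using Y.2)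
    exact Subtype.ext (funext fun j => by rw [hY j, hk, add_zero])
  obtain ⟨X, hX⟩ := ((Nat.bijective_iff_injective_and_card normalize).2 ⟨hinj, hcard⟩).2
    ⟨_, hA.sub_apply_zero⟩
  have hXA : (fun j => A j + (X.1 0 - A 0)) = X.1 := funext fun j => by
    have := congrFun (congrArg Subtype.val hX) j
    simp only [normalize] at this
    linarith
  refine ⟨X.1 0 - A 0, by simpa only [hXA] using X.2, fun k hk => ?_⟩
  have := hunique _ hk (X.1 0 - A 0 - k) (by simpa only [add_add_sub_cancel, hXA] using X.2)
  linarith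

theorem convex_triangulation_is_slice_general (n d : ℕ) (S : Set (Fin (d+1) → ℤ))
    (hS : ∀ X ∈ S, Dset (n + 2*d + 1) d X)
    (hconv : ∀ A ∈ S, ∀ B ∈ S, ∀ X,
      Relation.ReflTransGen (TArrow (n + 2*d + 1) d) A X →
      Relation.ReflTransGen (TArrow (n + 2*d + 1) d) X B → X ∈ S)
    (hnon : ∀ A ∈ S, ∀ B ∈ S, A ≠ B →
      ¬ Intertw (n + 2*d + 1) d (fun j => pimod (n + 2*d + 1) (A j))
        (fun j => pimod (n + 2*d + 1) (B j)))
    (hcard : Nat.card S = (n + d - 1).choose d) :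
    (∀ A ∈ S, ∀ k : ℤ, (fun j => A j + k) ∈ S → k = 0) ∧
    (∀ A, Dset (n + 2*d + 1) d A → ∃! k : ℤ, (fun j => A j + k) ∈ S) := by
  obtain rfl | hn := Nat.eq_zero_or_pos n
  · have hempty : ∀ A, ¬ Dset (0 + 2*d + 1) d A := fun A hA => by
      have := hA.two_mul_succ_le
      omega
    exact ⟨fun A hA => absurd (hS A hA) (hempty A), fun A hA => absurd hA (hempty A)⟩
  have hunique : ∀ A ∈ S, ∀ k : ℤ, (fun j => A j + k) ∈ S → k = 0 := by
    obtain rfl | hn2 : n = 1 ∨ 2 ≤ n := by omega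
    · have : Subsingleton S :=
        (Nat.card_eq_one_iff_unique.1 (by rw [hcard, Nat.add_sub_cancel_left, Nat.choose_self])).1
      intro A hA k hk
      simpa using congrFun (congrArg Subtype.val (Subsingleton.elim (⟨_, hk⟩ : S) ⟨A, hA⟩)) 0
    · exact fun A hA k hk => eq_zero_of_add_const_mem hS hconv hnon (by omega) hA hk
  have hcard' : Nat.card S = Nat.card (normalizedDset (n + 2*d + 1) d) := by
    rw [hcard, natCard_normalizedDset (by omega), show n + 2*d + 1 - d - 2 = n + d - 1 by omega]
  have : Finite (normalizedDset (n + 2*d + 1) d) :=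
    Nat.finite_of_card_ne_zero <| by rw [← hcard', hcard]; exact (Nat.choose_pos (by omega)).ne'
  exact ⟨hunique, fun A hA => existsUnique_add_const_mem hS hunique hcard' hA⟩

/-- If S is a convex full subquiver of Q̃^{(d,n)} such that π is
injective on S_0 and π(S_0) is pairwise non-intertwining of maximal size
(n+d-1 choose d), then S contains at most one vertex from each ν_d-orbit; in
particular S meets each ν_d-orbit exactly once, i.e. S is a slice. -/
theorem convex_triangulation_is_slice (n d : ℕ) (S : Set (Fin (d+1) → ℤ))
    (hS : ∀ X ∈ S, Dset (n + 2*d + 1) d X)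
    (hconv : ∀ A ∈ S, ∀ B ∈ S, ∀ X,
      Relation.ReflTransGen (TArrow (n + 2*d + 1) d) A X →
      Relation.ReflTransGen (TArrow (n + 2*d + 1) d) X B → X ∈ S)
    (hinj : Set.InjOn (fun A => fun j => pimod (n + 2*d + 1) (A j)) S)
    (hnon : ∀ A ∈ S, ∀ B ∈ S, A ≠ B →
      ¬ Intertw (n + 2*d + 1) d (fun j => pimod (n + 2*d + 1) (A j))
        (fun j => pimod (n + 2*d + 1) (B j)))
    (hcard : Nat.card S = (n + d - 1).choose d) :
    (∀ A ∈ S, ∀ k : ℤ, (fun j => A j + k) ∈ S → k = 0) ∧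
    (∀ A, Dset (n + 2*d + 1) d A → ∃! k : ℤ, (fun j => A j + k) ∈ S) :=
  convex_triangulation_is_slice_general n d S hS hconv hnon hcard
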